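/- Define L₁(n,b) := ∫₀¹ (Γ(b-p)/Γ(b+1)) · (Γ(n-b+p)/Γ(n-b+1)) · dp/(Γ(1-p)Γ(1+p)). Let (b_n) be a sequence of integers with 1 ≤ b_n ≤ n-1 and (n-b_n)/n → 0. Then lim_{n→∞} (n-b_n)·log(n/(n-b_n))·n·L₁(n,b_n) = 1. Equivalently, (n-b)·log(n/(n-b))·E[SFS_{n,b}] → θ, since E[SFS_{n,b}] = θ·n·L₁(n,b). -/

import Mathlib

/-!
Write `c = b` and `m = n - b`. Wendel's inequalities
`(x + s)^(s-1) ≤ Γ(x+s)/Γ(x+1) ≤ x^(s-1)`, consequences of the log-convexity of `Γ`, together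
with the reflection formula `(Γ(1-p) Γ(1+p))⁻¹ = sinc (π p)` trap `c m L₁` between the
Laplace-type integrals `∫₀¹ sinc(πp)/(1+p) (m/c)^p dp` and `∫₀¹ sinc(πp) (m/(c-1))^p dp`.
For continuous `g`, `∫₀¹ g(p) x^p dp ~ g(0) / log x⁻¹` as `x → 0⁺`, and
`log (n/m) ~ log (c/m) ~ log ((c-1)/m)` because `m = o(c)`; so both bounds on
`m log(n/m) · n L₁ = (n/c) log(n/m) · c m L₁` tend to `1`.
-/

open Real

/-- `L₁(n,b) = ∫₀¹ (Γ(b-p)/Γ(b+1)) (Γ(n-b+p)/Γ(n-b+1)) dp/(Γ(1-p)Γ(1+p))`. -/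
noncomputable def L1 (n b : ℕ) : ℝ :=
  ∫ p in (0:ℝ)..1, (Real.Gamma ((b : ℝ) - p) / Real.Gamma ((b : ℝ) + 1)) *
    (Real.Gamma ((n : ℝ) - (b : ℝ) + p) / Real.Gamma ((n : ℝ) - (b : ℝ) + 1)) /
    (Real.Gamma (1 - p) * Real.Gamma (1 + p))

open Filter Set Topology Asymptotics

theorem Real.Gamma_add_le_rpow_mul_Gamma {x s : ℝ} (hx : 0 < x) (hs0 : 0 ≤ s) (hs1 : s ≤ 1) :
    Gamma (x + s) ≤ x ^ s * Gamma x := by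
  have hΓx := Gamma_pos_of_pos hx
  have h := convexOn_log_Gamma.2 (mem_Ioi.2 hx) (mem_Ioi.2 (by linarith : 0 < x + 1))
    (sub_nonneg.2 hs1) hs0 (by ring)
  simp only [Function.comp_apply, smul_eq_mul] at h
  rw [Gamma_add_one hx.ne', log_mul hx.ne' hΓx.ne', show (1 - s) * x + s * (x + 1) = x + s by ring]
    at h
  calc Gamma (x + s) = exp (log (Gamma (x + s))) :=
        (exp_log (Gamma_pos_of_pos (by linarith))).symm
    _ ≤ exp (log x * s + log (Gamma x)) := exp_le_exp.2 (by linarith)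
    _ = x ^ s * Gamma x := by rw [exp_add, exp_log hΓx, rpow_def_of_pos hx]

theorem Real.Gamma_add_div_Gamma_add_one_mem_Icc {x s : ℝ} (hx : 0 < x) (hs0 : 0 ≤ s)
    (hs1 : s ≤ 1) :
    Gamma (x + s) / Gamma (x + 1) ∈ Icc ((x + s) ^ (s - 1)) (x ^ (s - 1)) := by
  have hxs : 0 < x + s := by linarith
  refine ⟨?_, ?_⟩
  · have h := Gamma_add_le_rpow_mul_Gamma hxs (sub_nonneg.2 hs1) (by linarith : 1 - s ≤ 1)
    rw [show x + s + (1 - s) = x + 1 by ring] at h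
    rw [le_div_iff₀ (Gamma_pos_of_pos (by linarith)), show s - 1 = -(1 - s) by ring,
      rpow_neg hxs.le]
    calc ((x + s) ^ (1 - s))⁻¹ * Gamma (x + 1)
        ≤ ((x + s) ^ (1 - s))⁻¹ * ((x + s) ^ (1 - s) * Gamma (x + s)) :=
          mul_le_mul_of_nonneg_left h (by positivity)
      _ = Gamma (x + s) := by field_simp
  · rw [Gamma_add_one hx.ne', rpow_sub_one hx.ne',
      div_le_div_iff₀ (by positivity [Gamma_pos_of_pos hx]) hx]
    nlinarith [Gamma_add_le_rpow_mul_Gamma hx hs0 hs1]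

theorem Real.mul_Gamma_sub_div_Gamma_add_one_mem_Icc {c p : ℝ} (hc : 1 < c) (hp0 : 0 ≤ p)
    (hp1 : p ≤ 1) :
    c * (Gamma (c - p) / Gamma (c + 1)) ∈ Icc (c ^ (-p)) ((c - 1) ^ (-p)) := by
  have hc0 : 0 < c := by linarith
  have hratio : c * (Gamma (c - p) / Gamma (c + 1)) =
      Gamma (c - 1 + (1 - p)) / Gamma (c - 1 + 1) := by
    rw [Gamma_add_one hc0.ne', sub_add_cancel, show c - 1 + (1 - p) = c - p by ring]
    field_simp [(Gamma_pos_of_pos hc0).ne']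
  obtain ⟨hlo, hhi⟩ :=
    Gamma_add_div_Gamma_add_one_mem_Icc (s := 1 - p) (by linarith : 0 < c - 1) (by linarith)
      (by linarith)
  rw [show 1 - p - 1 = -p by ring] at hlo hhi
  rw [hratio]
  exact ⟨(rpow_le_rpow_of_nonpos (by linarith) (by linarith) (by linarith)).trans hlo, hhi⟩

theorem Real.mul_Gamma_add_div_Gamma_add_one_mem_Icc {m p : ℝ} (hm : 1 ≤ m) (hp0 : 0 ≤ p)
    (hp1 : p ≤ 1) :
    m * (Gamma (m + p) / Gamma (m + 1)) ∈ Icc (m ^ p / (1 + p)) (m ^ p) := by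
  have hm0 : 0 < m := by linarith
  obtain ⟨hlo, hhi⟩ := Gamma_add_div_Gamma_add_one_mem_Icc hm0 hp0 hp1
  refine ⟨?_, ?_⟩
  · calc m ^ p / (1 + p) ≤ m * ((m + p) ^ p / (m + p)) := by
          rw [div_le_iff₀ (by linarith), mul_div_assoc', div_mul_eq_mul_div,
            le_div_iff₀ (by linarith)]
          calc m ^ p * (m + p) ≤ (m + p) ^ p * (m * (1 + p)) :=
                mul_le_mul (rpow_le_rpow hm0.le (by linarith) hp0) (by nlinarith) (by linarith)
                  (by positivity)
            _ = m * (m + p) ^ p * (1 + p) := by ring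
      _ = m * (m + p) ^ (p - 1) := by rw [rpow_sub_one (by linarith)]
      _ ≤ _ := mul_le_mul_of_nonneg_left hlo hm0.le
  · calc m * (Gamma (m + p) / Gamma (m + 1)) ≤ m * m ^ (p - 1) :=
          mul_le_mul_of_nonneg_left hhi hm0.le
      _ = m ^ p := by rw [rpow_sub_one hm0.ne']; field_simp

theorem Real.mul_mul_Gamma_ratios_mem_Icc {c m p : ℝ} (hc : 1 < c) (hm : 1 ≤ m) (hp0 : 0 ≤ p)
    (hp1 : p ≤ 1) :
    c * m * (Gamma (c - p) / Gamma (c + 1) * (Gamma (m + p) / Gamma (m + 1))) ∈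
      Icc ((m / c) ^ p / (1 + p)) ((m / (c - 1)) ^ p) := by
  obtain ⟨hA₁, hA₂⟩ := mul_Gamma_sub_div_Gamma_add_one_mem_Icc hc hp0 hp1
  obtain ⟨hB₁, hB₂⟩ := mul_Gamma_add_div_Gamma_add_one_mem_Icc hm hp0 hp1
  have hm0 : 0 ≤ m := by linarith
  rw [show c * m * (Gamma (c - p) / Gamma (c + 1) * (Gamma (m + p) / Gamma (m + 1))) =
    c * (Gamma (c - p) / Gamma (c + 1)) * (m * (Gamma (m + p) / Gamma (m + 1))) by ring]
  constructor
  · calc (m / c) ^ p / (1 + p) = c ^ (-p) * (m ^ p / (1 + p)) := by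
          rw [div_rpow hm0 (by linarith), rpow_neg (by linarith)]; ring
      _ ≤ _ := mul_le_mul hA₁ hB₁ (by positivity) ((rpow_nonneg (by linarith) _).trans hA₁)
  · calc _ ≤ (c - 1) ^ (-p) * m ^ p :=
          mul_le_mul hA₂ hB₂ ((by positivity : (0:ℝ) ≤ m ^ p / (1 + p)).trans hB₁)
            (rpow_nonneg (by linarith) _)
      _ = (m / (c - 1)) ^ p := by rw [div_rpow hm0 (by linarith), rpow_neg (by linarith)]; ring

theorem Real.inv_Gamma_one_sub_mul_Gamma_one_add (p : ℝ) :
    (Gamma (1 - p) * Gamma (1 + p))⁻¹ = sinc (π * p) := by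
  rcases eq_or_ne p 0 with rfl | hp
  · simp
  rw [sinc_of_ne_zero (mul_ne_zero pi_ne_zero hp), add_comm, Gamma_add_one hp,
    mul_left_comm, mul_comm (Gamma (1 - p)), Gamma_mul_Gamma_one_sub, mul_inv, inv_div]
  ring

theorem Real.sinc_nonneg {x : ℝ} (hx0 : 0 ≤ x) (hxπ : x ≤ π) : 0 ≤ sinc x := by
  rw [sinc_apply]
  split_ifs
  · exact zero_le_one
  · exact div_nonneg (sin_nonneg_of_nonneg_of_le_pi hx0 hxπ) hx0

noncomputable def L1Real (c m : ℝ) : ℝ :=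
  ∫ p in (0:ℝ)..1, Gamma (c - p) / Gamma (c + 1) * (Gamma (m + p) / Gamma (m + 1)) /
    (Gamma (1 - p) * Gamma (1 + p))

theorem mul_mul_L1Real_mem_Icc {c m : ℝ} (hc : 1 < c) (hm : 1 ≤ m) :
    c * m * L1Real c m ∈ Icc (∫ p in (0:ℝ)..1, sinc (π * p) / (1 + p) * (m / c) ^ p)
      (∫ p in (0:ℝ)..1, sinc (π * p) * (m / (c - 1)) ^ p) := by
  have hΓ : ContinuousOn Gamma (Ioi 0) := convexOn_Gamma.continuousOn isOpen_Ioi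
  have hsinc : Continuous fun p => sinc (π * p) := by fun_prop
  have hpow : ∀ {x : ℝ}, 0 < x → Continuous fun p : ℝ => x ^ p := fun hx =>
    continuous_const.rpow continuous_id fun _ => Or.inl hx.ne'
  have hcont : ContinuousOn (fun p => c * m * (Gamma (c - p) / Gamma (c + 1) *
      (Gamma (m + p) / Gamma (m + 1))) * sinc (π * p)) (Icc 0 1) := by
    refine ContinuousOn.mul (continuousOn_const.mul (ContinuousOn.mul ?_ ?_)) hsinc.continuousOn
    · exact (hΓ.comp (by fun_prop) fun p hp => mem_Ioi.2 (by linarith [hp.2])).div_const _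
    · exact (hΓ.comp (by fun_prop) fun p hp => mem_Ioi.2 (by linarith [hp.1])).div_const _
  have hL : c * m * L1Real c m = ∫ p in (0:ℝ)..1, c * m * (Gamma (c - p) / Gamma (c + 1) *
      (Gamma (m + p) / Gamma (m + 1))) * sinc (π * p) := by
    simp_rw [L1Real, ← intervalIntegral.integral_const_mul, div_eq_mul_inv _ (_ * _),
      inv_Gamma_one_sub_mul_Gamma_one_add, mul_assoc]
  have hsinc_nonneg : ∀ p ∈ Icc (0:ℝ) 1, 0 ≤ sinc (π * p) := fun p hp =>
    sinc_nonneg (by nlinarith [pi_pos, hp.1]) (by nlinarith [pi_pos, hp.2])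
  rw [hL]
  constructor
  · refine intervalIntegral.integral_mono_on zero_le_one ?_
      (hcont.intervalIntegrable_of_Icc zero_le_one) fun p hp => ?_
    · refine ContinuousOn.intervalIntegrable_of_Icc zero_le_one (ContinuousOn.mul ?_
        (hpow (by positivity)).continuousOn)
      exact hsinc.continuousOn.div (by fun_prop) fun p hp => by linarith [hp.1]
    · calc _ = (m / c) ^ p / (1 + p) * sinc (π * p) := by ring
        _ ≤ _ := mul_le_mul_of_nonneg_right
          (mul_mul_Gamma_ratios_mem_Icc hc hm hp.1 hp.2).1 (hsinc_nonneg p hp)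
  · refine intervalIntegral.integral_mono_on zero_le_one
      (hcont.intervalIntegrable_of_Icc zero_le_one) ?_ fun p hp => ?_
    · exact (hsinc.mul (hpow (div_pos (by linarith) (by linarith)))).intervalIntegrable _ _
    · calc _ ≤ (m / (c - 1)) ^ p * sinc (π * p) :=
            mul_le_mul_of_nonneg_right
              (mul_mul_Gamma_ratios_mem_Icc hc hm hp.1 hp.2).2 (hsinc_nonneg p hp)
        _ = _ := by ring

theorem mul_log_mul_L1Real_mem_Icc {c m : ℝ} (hc : 1 < c) (hm : 1 ≤ m) :
    m * log ((c + m) / m) * ((c + m) * L1Real c m) ∈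
      Icc ((c + m) / c * (log ((c + m) / m) *
          ∫ p in (0:ℝ)..1, sinc (π * p) / (1 + p) * (m / c) ^ p))
        ((c + m) / c * (log ((c + m) / m) *
          ∫ p in (0:ℝ)..1, sinc (π * p) * (m / (c - 1)) ^ p)) := by
  obtain ⟨hlo, hhi⟩ := mul_mul_L1Real_mem_Icc hc hm
  have hfactor : 0 ≤ (c + m) / c * log ((c + m) / m) :=
    mul_nonneg (by positivity) (log_nonneg ((le_div_iff₀ (by linarith)).2 (by linarith)))
  have hT : m * log ((c + m) / m) * ((c + m) * L1Real c m) =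
      (c + m) / c * log ((c + m) / m) * (c * m * L1Real c m) := by
    field_simp
  simp only [hT, ← mul_assoc ((c + m) / c) (log ((c + m) / m))]
  exact ⟨mul_le_mul_of_nonneg_left hlo hfactor, mul_le_mul_of_nonneg_left hhi hfactor⟩

theorem mul_integral_exp_neg_mul {t : ℝ} (ht : t ≠ 0) :
    t * ∫ p in (0:ℝ)..1, exp (-t * p) = 1 - exp (-t) := by
  rw [intervalIntegral.integral_comp_mul_left exp (neg_ne_zero.2 ht), integral_exp, smul_eq_mul]
  field_simp
  simp

theorem tendsto_mul_exp_neg_mul_atTop_nhds_zero {δ : ℝ} (hδ : 0 < δ) :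
    Tendsto (fun t => t * exp (-t * δ)) atTop (𝓝 0) := by
  have h := ((tendsto_pow_mul_exp_neg_atTop_nhds_zero 1).comp
    (tendsto_id.atTop_mul_const hδ)).const_mul δ⁻¹
  rw [mul_zero] at h
  refine h.congr fun t => ?_
  simp only [Function.comp_apply, id, pow_one]
  field_simp

theorem tendsto_mul_integral_sub_mul_exp_neg_mul {g : ℝ → ℝ} (hg : ContinuousOn g (Icc 0 1)) :
    Tendsto (fun t => t * ∫ p in (0:ℝ)..1, (g p - g 0) * exp (-t * p)) atTop (𝓝 0) := by
  refine Metric.tendsto_nhds.2 fun ε hε => ?_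
  obtain ⟨M, hM⟩ := isCompact_Icc.exists_bound_of_continuousOn
    (f := fun p => g p - g 0) (hg.sub continuousOn_const)
  obtain ⟨δ, hδ, hgδ⟩ :=
    Metric.continuousWithinAt_iff.1 (hg 0 ⟨le_rfl, zero_le_one⟩) (ε / 2) (half_pos hε)
  have htail := (tendsto_mul_exp_neg_mul_atTop_nhds_zero hδ).const_mul M
  rw [mul_zero] at htail
  filter_upwards [htail.eventually (gt_mem_nhds (half_pos hε)), eventually_gt_atTop 0]
    with t htδ ht
  -- `|g p - g 0|` is below `ε / 2` on `[0, δ)`, and below `M` beyond, where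
  -- `e^{-tp} ≤ e^{-tδ}` and `t e^{-tδ} → 0`.
  have hbound : ∀ p ∈ Ioc (0:ℝ) 1,
      ‖(g p - g 0) * exp (-t * p)‖ ≤ ε / 2 * exp (-t * p) + M * exp (-t * δ) := by
    intro p hp
    rw [norm_mul, Real.norm_of_nonneg (exp_pos _).le]
    rcases lt_or_ge p δ with hpδ | hpδ
    · have h := hgδ (Ioc_subset_Icc_self hp) (by rwa [Real.dist_eq, sub_zero, abs_of_pos hp.1])
      rw [Real.dist_eq, ← Real.norm_eq_abs] at h
      have hM0 : 0 ≤ M := (norm_nonneg _).trans (hM 0 ⟨le_rfl, zero_le_one⟩)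
      nlinarith [exp_pos (-t * p), exp_pos (-t * δ)]
    · have h1 := hM p (Ioc_subset_Icc_self hp)
      have h2 : exp (-t * p) ≤ exp (-t * δ) := exp_le_exp.2 (by nlinarith)
      nlinarith [exp_pos (-t * p), exp_pos (-t * δ), norm_nonneg (g p - g 0)]
  have hint := intervalIntegral.norm_integral_le_of_norm_le (μ := MeasureTheory.volume)
    zero_le_one (Eventually.of_forall hbound) (Continuous.intervalIntegrable (by fun_prop) _ _)
  rw [intervalIntegral.integral_add (Continuous.intervalIntegrable (by fun_prop) _ _)
    (Continuous.intervalIntegrable (by fun_prop) _ _), intervalIntegral.integral_const_mul,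
    intervalIntegral.integral_const, sub_zero, one_smul] at hint
  rw [dist_zero_right, norm_mul, Real.norm_of_nonneg ht.le]
  calc t * ‖∫ p in (0:ℝ)..1, (g p - g 0) * exp (-t * p)‖
      ≤ t * (ε / 2 * ∫ p in (0:ℝ)..1, exp (-t * p)) + M * (t * exp (-t * δ)) := by
        nlinarith
    _ = ε / 2 * (1 - exp (-t)) + M * (t * exp (-t * δ)) := by
        rw [← mul_integral_exp_neg_mul ht.ne']; ring
    _ < ε := by nlinarith [exp_pos (-t)]

theorem tendsto_mul_integral_mul_exp_neg_mul {g : ℝ → ℝ} (hg : ContinuousOn g (Icc 0 1)) :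
    Tendsto (fun t => t * ∫ p in (0:ℝ)..1, g p * exp (-t * p)) atTop (𝓝 (g 0)) := by
  have hmain : Tendsto (fun t => g 0 * (1 - exp (-t))) atTop (𝓝 (g 0)) := by
    simpa using (tendsto_exp_neg_atTop_nhds_zero.const_sub 1).const_mul (g 0)
  refine (add_zero (g 0) ▸ hmain.add (tendsto_mul_integral_sub_mul_exp_neg_mul hg)).congr' ?_
  filter_upwards [eventually_ne_atTop 0] with t ht
  have hexp : IntervalIntegrable (fun p => exp (-t * p)) MeasureTheory.volume 0 1 :=
    Continuous.intervalIntegrable (by fun_prop) _ _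
  have hgexp : IntervalIntegrable (fun p => g p * exp (-t * p)) MeasureTheory.volume 0 1 :=
    (hg.mul (by fun_prop)).intervalIntegrable_of_Icc zero_le_one
  simp_rw [sub_mul, intervalIntegral.integral_sub hgexp (hexp.const_mul (g 0)),
    intervalIntegral.integral_const_mul, ← mul_integral_exp_neg_mul ht]
  ring

theorem Real.tendsto_log_inv_nhdsGT_zero : Tendsto (fun x => log x⁻¹) (𝓝[>] 0) atTop := by
  simpa only [Function.comp_def, log_inv] using
    tendsto_neg_atBot_atTop.comp tendsto_log_nhdsGT_zero

theorem tendsto_log_inv_mul_integral_mul_rpow {g : ℝ → ℝ} (hg : ContinuousOn g (Icc 0 1)) :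
    Tendsto (fun x => log x⁻¹ * ∫ p in (0:ℝ)..1, g p * x ^ p) (𝓝[>] 0) (𝓝 (g 0)) := by
  refine ((tendsto_mul_integral_mul_exp_neg_mul hg).comp tendsto_log_inv_nhdsGT_zero).congr' ?_
  filter_upwards [self_mem_nhdsWithin] with x hx
  simp only [Function.comp_apply, log_inv, neg_neg, rpow_def_of_pos (mem_Ioi.1 hx)]

theorem isEquivalent_log_log_inv {α : Type*} {l : Filter α} {x z : α → ℝ}
    (hx : Tendsto x l (𝓝[>] 0)) (hxz : Tendsto (fun i => x i * z i) l (𝓝 1)) :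
    (fun i => log (z i)) ~[l] fun i => log (x i)⁻¹ := by
  have hlog : Tendsto (fun i => log (x i)⁻¹) l atTop := tendsto_log_inv_nhdsGT_zero.comp hx
  have hsmall : (fun i => log (x i * z i)) =o[l] fun i => log (x i)⁻¹ := by
    have h := ((continuousAt_log one_ne_zero).tendsto.comp hxz).isBigO_one ℝ
    exact h.trans_isLittleO ((isLittleO_one_left_iff ℝ).2 (tendsto_norm_atTop_atTop.comp hlog))
  refine (IsEquivalent.refl.add_isLittleO hsmall).congr_left ?_
  filter_upwards [hx self_mem_nhdsWithin, hxz.eventually (lt_mem_nhds one_pos)] with i hxi hxzi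
  have hzi : 0 < z i := pos_of_mul_pos_right hxzi (mem_Ioi.1 hxi).le
  rw [Pi.add_apply, log_mul (mem_Ioi.1 hxi).ne' hzi.ne', log_inv]
  ring

theorem tendsto_log_mul_integral_mul_rpow {α : Type*} {l : Filter α} {g : ℝ → ℝ}
    (hg : ContinuousOn g (Icc 0 1)) {x z : α → ℝ} (hx : Tendsto x l (𝓝[>] 0))
    (hxz : Tendsto (fun i => x i * z i) l (𝓝 1)) :
    Tendsto (fun i => log (z i) * ∫ p in (0:ℝ)..1, g p * x i ^ p) l (𝓝 (g 0)) :=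
  ((isEquivalent_log_log_inv hx hxz).mul IsEquivalent.refl).symm.tendsto_nhds
    ((tendsto_log_inv_mul_integral_mul_rpow hg).comp hx)

theorem tendsto_div_sub_one_of_tendsto_div {α : Type*} {l : Filter α} {c u : α → ℝ} {a : ℝ}
    (hc : Tendsto c l atTop) (hu : Tendsto (fun i => u i / c i) l (𝓝 a)) :
    Tendsto (fun i => u i / (c i - 1)) l (𝓝 a) := by
  have hc' : Tendsto (fun i => 1 - (c i)⁻¹) l (𝓝 1) := by
    simpa using hc.inv_tendsto_atTop.const_sub 1
  refine (div_one a ▸ hu.div hc' one_ne_zero).congr' ?_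
  filter_upwards [hc.eventually_gt_atTop 1] with i hci
  have : c i - 1 ≠ 0 := by linarith
  simp only [Pi.div_apply]
  field_simp

theorem tendsto_mul_log_mul_L1Real {α : Type*} {l : Filter α} {c m : α → ℝ}
    (hcm : ∀ᶠ i in l, 0 < c i ∧ 1 ≤ m i) (hmc : Tendsto (fun i => m i / c i) l (𝓝 0)) :
    Tendsto (fun i => m i * log ((c i + m i) / m i) * ((c i + m i) * L1Real (c i) (m i)))
      l (𝓝 1) := by
  have hx : Tendsto (fun i => m i / c i) l (𝓝[>] 0) := by
    refine tendsto_nhdsWithin_iff.2 ⟨hmc, ?_⟩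
    filter_upwards [hcm] with i ⟨hci, hmi⟩
    exact mem_Ioi.2 (div_pos (by linarith) hci)
  have hctop : Tendsto c l atTop := by
    refine tendsto_atTop_mono' l ?_ hx.inv_tendsto_nhdsGT_zero
    filter_upwards [hcm] with i ⟨hci, hmi⟩
    simpa only [Pi.inv_apply, inv_div] using div_le_self hci.le hmi
  have hc1 : ∀ᶠ i in l, 1 < c i ∧ 1 ≤ m i :=
    (hctop.eventually_gt_atTop 1).and (hcm.mono fun _ hi => hi.2)
  have hy : Tendsto (fun i => m i / (c i - 1)) l (𝓝[>] 0) := by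
    refine tendsto_nhdsWithin_iff.2 ⟨tendsto_div_sub_one_of_tendsto_div hctop hmc, ?_⟩
    filter_upwards [hc1] with i ⟨hci, hmi⟩
    exact mem_Ioi.2 (div_pos (by linarith) (by linarith))
  have hnc : Tendsto (fun i => (c i + m i) / c i) l (𝓝 1) := by
    refine (add_zero (1:ℝ) ▸ hmc.const_add 1).congr' ?_
    filter_upwards [hc1] with i ⟨hci, hmi⟩
    field_simp
  have hratio : ∀ {x : α → ℝ}, Tendsto (fun i => (c i + m i) / x i) l (𝓝 1) →
      Tendsto (fun i => m i / x i * ((c i + m i) / m i)) l (𝓝 1) := fun h => h.congr' (by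
    filter_upwards [hc1] with i ⟨hci, hmi⟩
    have : m i ≠ 0 := by linarith
    field_simp)
  have hsinc : Continuous fun p => sinc (π * p) := by fun_prop
  have hlo := hnc.mul (tendsto_log_mul_integral_mul_rpow (g := fun p => sinc (π * p) / (1 + p))
    (hsinc.continuousOn.div (by fun_prop) fun p hp => by linarith [hp.1]) hx (hratio hnc))
  have hhi := hnc.mul (tendsto_log_mul_integral_mul_rpow hsinc.continuousOn hy
    (hratio (tendsto_div_sub_one_of_tendsto_div hctop hnc)))
  simp only [mul_zero, sinc_zero, add_zero, div_one, mul_one] at hlo hhi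
  refine tendsto_of_tendsto_of_tendsto_of_le_of_le' hlo hhi ?_ ?_
  all_goals filter_upwards [hc1] with i ⟨hci, hmi⟩
  · exact (mul_log_mul_L1Real_mem_Icc hci hmi).1
  · exact (mul_log_mul_L1Real_mem_Icc hci hmi).2

theorem tendsto_sub_div_of_tendsto_sub_div {α : Type*} {l : Filter α} {x y : α → ℝ}
    (hxy : ∀ᶠ i in l, x i ≠ 0 ∧ y i ≠ 0)
    (h : Tendsto (fun i => (x i - y i) / x i) l (𝓝 0)) :
    Tendsto (fun i => (x i - y i) / y i) l (𝓝 0) := by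
  have h' : Tendsto (fun i => 1 - (x i - y i) / x i) l (𝓝 1) := by simpa using h.const_sub 1
  refine (zero_div (1:ℝ) ▸ h.div h' one_ne_zero).congr' ?_
  filter_upwards [hxy] with i ⟨hx, hy⟩
  simp only [Pi.div_apply]
  rw [one_sub_div hx, sub_sub_cancel, div_div_div_cancel_right₀ hx]

theorem stmt12 (θ : ℝ) (b : ℕ → ℕ)
    (hb : ∀ᶠ n : ℕ in Filter.atTop, 1 ≤ b n ∧ b n ≤ n - 1)
    (h0 : Filter.Tendsto (fun n : ℕ => ((n : ℝ) - (b n : ℝ)) / (n : ℝ))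
      Filter.atTop (nhds 0)) :
    Filter.Tendsto (fun n : ℕ =>
        ((n : ℝ) - (b n : ℝ)) * Real.log ((n : ℝ) / ((n : ℝ) - (b n : ℝ))) *
          ((n : ℝ) * L1 n (b n)))
      Filter.atTop (nhds 1) ∧
    Filter.Tendsto (fun n : ℕ =>
        ((n : ℝ) - (b n : ℝ)) * Real.log ((n : ℝ) / ((n : ℝ) - (b n : ℝ))) *
          (θ * (n : ℝ) * L1 n (b n)))
      Filter.atTop (nhds θ) := by
  have hcm : ∀ᶠ n : ℕ in atTop, 0 < (b n : ℝ) ∧ 1 ≤ (n : ℝ) - b n := by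
    filter_upwards [hb] with n ⟨hb1, hbn⟩
    have : b n + 1 ≤ n := by omega
    exact ⟨by exact_mod_cast hb1, by rw [le_sub_iff_add_le']; exact_mod_cast this⟩
  have hmc : Tendsto (fun n : ℕ => ((n : ℝ) - b n) / b n) atTop (𝓝 0) := by
    refine tendsto_sub_div_of_tendsto_sub_div ?_ h0
    filter_upwards [hcm] with n ⟨hbn, hmn⟩
    exact ⟨by linarith, hbn.ne'⟩
  have hL1 : ∀ n k : ℕ, L1Real k (n - k) = L1 n k := fun _ _ => rfl
  have hlim := tendsto_mul_log_mul_L1Real hcm hmc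
  simp only [add_sub_cancel, hL1] at hlim
  refine ⟨hlim, ?_⟩
  simpa only [mul_one, mul_assoc, mul_left_comm θ] using hlim.const_mul θ
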